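/- For any upset α ⊆ [0,1] (a set containing 1, excluding 0, and upward closed), an argument ⟨Γ, Δ⟩ of finite sets of propositional formulas is α-materially valid (i.e., every probabilistic model assigns a probability in α to ⋀Γ ⊃ ⋁Δ) if and only if ⟨Γ, Δ⟩ is classically valid. -/

import Mathlib

/-- Propositional formulas: atoms, negation, disjunction. -/
inductive Fml : Type
  | atom : ℕ → Fml
  | neg : Fml → Fml
  | or : Fml → Fml → Fml
deriving DecidableEq

namespace Fml

def and (φ ψ : Fml) : Fml := neg (or (neg φ) (neg ψ))

def bot : Fml := and (atom 0) (neg (atom 0))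

def imp (φ ψ : Fml) : Fml := or (neg φ) ψ

def eval (v : ℕ → Bool) : Fml → Bool
  | atom n => v n
  | neg φ => !(eval v φ)
  | or φ ψ => (eval v φ) || (eval v ψ)

end Fml

/-- Two formulas are jointly classically unsatisfiable. -/
def Incompatible (φ ψ : Fml) : Prop :=
  ∀ v : ℕ → Bool, ¬(φ.eval v = true ∧ ψ.eval v = true)

/-- Classical (Set-Set) validity. -/
def ClValid (Γ Δ : Finset Fml) : Prop :=
  ∀ v : ℕ → Bool, (∀ γ ∈ Γ, γ.eval v = true) → ∃ δ ∈ Δ, δ.eval v = true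

/-- Classical single-conclusion entailment. -/
def ClEntails (Γ : Finset Fml) (φ : Fml) : Prop :=
  ∀ v : ℕ → Bool, (∀ γ ∈ Γ, γ.eval v = true) → φ.eval v = true

def ClConsistent (Γ : Finset Fml) : Prop :=
  ∃ v : ℕ → Bool, ∀ γ ∈ Γ, γ.eval v = true

def Tautology (φ : Fml) : Prop := ∀ v : ℕ → Bool, φ.eval v = true

/-- A probability distribution on formulas. -/
structure ProbDist where
  p : Fml → ℝ
  nonneg : ∀ φ, 0 ≤ p φ
  le_one : ∀ φ, p φ ≤ 1
  bot_eq : p Fml.bot = 0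
  neg_eq : ∀ φ, p (Fml.neg φ) = 1 - p φ
  add_eq : ∀ φ ψ, Incompatible φ ψ → p (Fml.or φ ψ) = p φ + p ψ

/-- A probabilistic model: worlds with classical valuations and a finitely
additive probability measure on subsets of worlds. -/
structure PModel where
  W : Type
  nonempty : Nonempty W
  val : W → ℕ → Bool
  μ : Set W → ℝ
  nonneg : ∀ A : Set W, 0 ≤ μ A
  empty_eq : μ (∅ : Set W) = 0
  univ_eq : μ (Set.univ : Set W) = 1
  add_eq : ∀ A B : Set W, Disjoint A B → μ (A ∪ B) = μ A + μ B

/-- Denotation of a formula in a model. -/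
def PModel.den (M : PModel) (φ : Fml) : Set M.W := {w | φ.eval (M.val w) = true}

/-- Induced probability of a formula in a model. -/
def PModel.prob (M : PModel) (φ : Fml) : ℝ := M.μ (M.den φ)

/-- An upset of [0,1]: contains 1, excludes 0, upward closed within [0,1]. -/
def IsUpset (α : Set ℝ) : Prop :=
  α ⊆ Set.Icc 0 1 ∧ (1 : ℝ) ∈ α ∧ (0 : ℝ) ∉ α ∧
    ∀ x ∈ α, ∀ y ∈ Set.Icc (0:ℝ) 1, x ≤ y → y ∈ α

/-- The mirror image of α. -/
def mirror (α : Set ℝ) : Set ℝ := {x ∈ Set.Icc (0:ℝ) 1 | 1 - x ∈ α}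

/-- The dual of α. -/
def dual (α : Set ℝ) : Set ℝ := Set.Icc (0:ℝ) 1 \ mirror α

/-- Conjunction of a finite set of formulas. -/
noncomputable def conj (Γ : Finset Fml) : Fml := Γ.toList.foldr Fml.and (Fml.neg Fml.bot)

/-- Disjunction of a finite set of formulas. -/
noncomputable def disj (Δ : Finset Fml) : Fml := Δ.toList.foldr Fml.or Fml.bot

/-- Disjunction of a list of formulas. -/
def disjList (l : List Fml) : Fml := l.foldr Fml.or Fml.bot

/-- α-preservation validity (over probability distributions). -/
def PresValid (α : Set ℝ) (Γ Δ : Finset Fml) : Prop :=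
  ∀ P : ProbDist, (∀ γ ∈ Γ, P.p γ ∈ α) → ∃ δ ∈ Δ, P.p δ ∈ α

/-- α-preservation validity (over probabilistic models). -/
def PresValidM (α : Set ℝ) (Γ Δ : Finset Fml) : Prop :=
  ∀ M : PModel, (∀ γ ∈ Γ, M.prob γ ∈ α) → ∃ δ ∈ Δ, M.prob δ ∈ α

/-- α-symmetric validity. -/
def SymValid (α : Set ℝ) (Γ Δ : Finset Fml) : Prop :=
  ∀ P : ProbDist, (∀ γ ∈ Γ, P.p γ ∈ α) → ∃ δ ∈ Δ, P.p δ ∉ mirror α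

/-- α-satisfiability of a finite set of formulas. -/
def Satis (α : Set ℝ) (Γ : Finset Fml) : Prop :=
  ∃ P : ProbDist, ∀ γ ∈ Γ, P.p γ ∈ α

/-!
A classical valuation is itself a one-world probabilistic model, in which a formula has
probability `1` or `0` according to its truth value; and a tautology denotes the whole space of
worlds in any model, so it has probability `1`. Since an upset contains `1` but not `0`, a formula
receives a probability in it in every model exactly when it is a tautology, and `⋀Γ ⊃ ⋁Δ` is a
tautology exactly when `⟨Γ, Δ⟩` is classically valid.
-/

namespace Fml

variable (v : ℕ → Bool)

@[simp]
lemma eval_and (φ ψ : Fml) : (and φ ψ).eval v = (φ.eval v && ψ.eval v) := by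
  simp [and, eval]

@[simp]
lemma eval_bot : bot.eval v = false := by
  simp [bot, eval]

@[simp]
lemma eval_imp (φ ψ : Fml) : (imp φ ψ).eval v = (!φ.eval v || ψ.eval v) := rfl

lemma eval_foldr_and (l : List Fml) :
    (l.foldr and (neg bot)).eval v = true ↔ ∀ φ ∈ l, φ.eval v = true := by
  induction l with
  | nil => simp [eval]
  | cons a t ih => simp [ih]

lemma eval_foldr_or (l : List Fml) :
    (l.foldr or bot).eval v = true ↔ ∃ φ ∈ l, φ.eval v = true := by
  induction l with
  | nil => simp
  | cons a t ih => simp [eval, ih]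

end Fml

lemma eval_conj (v : ℕ → Bool) (Γ : Finset Fml) :
    (conj Γ).eval v = true ↔ ∀ γ ∈ Γ, γ.eval v = true := by
  simp [conj, Fml.eval_foldr_and]

lemma eval_disj (v : ℕ → Bool) (Δ : Finset Fml) :
    (disj Δ).eval v = true ↔ ∃ δ ∈ Δ, δ.eval v = true := by
  simp [disj, Fml.eval_foldr_or]

lemma clValid_iff_tautology_imp_conj_disj (Γ Δ : Finset Fml) :
    ClValid Γ Δ ↔ Tautology (Fml.imp (conj Γ) (disj Δ)) := by
  refine forall_congr' fun v => ?_
  rw [← eval_conj, ← eval_disj, Fml.eval_imp]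
  cases (conj Γ).eval v <;> simp

namespace PModel

lemma prob_eq_one_of_tautology (M : PModel) {φ : Fml} (hφ : Tautology φ) : M.prob φ = 1 := by
  have hden : M.den φ = Set.univ := Set.eq_univ_of_forall fun w => hφ (M.val w)
  rw [prob, hden, M.univ_eq]

open Classical in
noncomputable def dirac (v : ℕ → Bool) : PModel where
  W := Unit
  nonempty := ⟨()⟩
  val := fun _ => v
  μ := fun A => if () ∈ A then 1 else 0
  nonneg := fun A => by split <;> norm_num
  empty_eq := by simp
  univ_eq := by simp
  add_eq := fun A B hAB => by
    by_cases hA : () ∈ A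
    · have hB : () ∉ B := Set.disjoint_left.mp hAB hA
      simp [hA, hB]
    · by_cases hB : () ∈ B <;> simp [hA, hB]

lemma prob_dirac (v : ℕ → Bool) (φ : Fml) :
    (dirac v).prob φ = if φ.eval v = true then 1 else 0 := by
  simp [prob, den, dirac]

end PModel

lemma forall_prob_mem_iff_tautology {α : Set ℝ} (h1 : (1 : ℝ) ∈ α) (h0 : (0 : ℝ) ∉ α)
    (φ : Fml) : (∀ M : PModel, M.prob φ ∈ α) ↔ Tautology φ := by
  refine ⟨fun h v => ?_, fun hφ M => (M.prob_eq_one_of_tautology hφ).symm ▸ h1⟩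
  by_contra hv
  have := h (PModel.dirac v)
  rw [PModel.prob_dirac, if_neg hv] at this
  exact h0 this

/-- α-material validity coincides with classical validity. -/
theorem stmt1 (α : Set ℝ) (hα : IsUpset α) (Γ Δ : Finset Fml) :
    (∀ M : PModel, M.prob (Fml.imp (conj Γ) (disj Δ)) ∈ α) ↔ ClValid Γ Δ := by
  obtain ⟨-, h1, h0, -⟩ := hα
  rw [clValid_iff_tautology_imp_conj_disj]
  exact forall_prob_mem_iff_tautology h1 h0 _
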